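/- arXiv:1803.09660 — 7 statements merged into one kernel-verified Lean document; each statement's English description precedes it below -/
import Mathlib

section
/- The essence function commutes with substitution: for all Δ-terms Δ₁, Δ₂ and variables x, the essence of Δ₁[Δ₂/x] is syntactically equal to (essence of Δ₁)[(essence of Δ₂)/x]. -/
set_option autoImplicit true

/-- Intersection types: atoms, the universal type ω, arrows and intersections. -/
inductive Ty : Type
  | atom : ℕ → Ty
  | omega : Ty
  | arr : Ty → Ty → Ty
  | inter : Ty → Ty → Ty
  deriving DecidableEq

/-- Pure λ-terms with named variables. -/
inductive Lam : Type
  | var : ℕ → Lam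
  | lam : ℕ → Lam → Lam
  | app : Lam → Lam → Lam
  deriving DecidableEq

/-- Substitution on pure λ-terms. -/
def Lam.subst : Lam → ℕ → Lam → Lam
  | .var y, x, N => if y = x then N else .var y
  | .lam y M, x, N => if y = x then .lam y M else .lam y (M.subst x N)
  | .app M1 M2, x, N => .app (M1.subst x N) (M2.subst x N)

/-- Free variables of a pure λ-term. -/
def Lam.fv : Lam → Set ℕ
  | .var y => {y}
  | .lam y M => M.fv \ {y}
  | .app M1 M2 => M1.fv ∪ M2.fv

/-- One-step β-reduction on pure λ-terms. -/
inductive Lam.Step : Lam → Lam → Prop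
  | beta (x : ℕ) (M N : Lam) : Lam.Step (.app (.lam x M) N) (M.subst x N)
  | lamC (x : ℕ) {M M' : Lam} : Lam.Step M M' → Lam.Step (.lam x M) (.lam x M')
  | appL {M M' : Lam} (N : Lam) : Lam.Step M M' → Lam.Step (.app M N) (.app M' N)
  | appR (M : Lam) {N N' : Lam} : Lam.Step N N' → Lam.Step (.app M N) (.app M N')

/-- One-step βη-reduction on pure λ-terms. -/
inductive Lam.StepEta : Lam → Lam → Prop
  | beta (x : ℕ) (M N : Lam) : Lam.StepEta (.app (.lam x M) N) (M.subst x N)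
  | eta (x : ℕ) (M : Lam) : x ∉ M.fv → Lam.StepEta (.lam x (.app M (.var x))) M
  | lamC (x : ℕ) {M M' : Lam} : Lam.StepEta M M' → Lam.StepEta (.lam x M) (.lam x M')
  | appL {M M' : Lam} (N : Lam) : Lam.StepEta M M' → Lam.StepEta (.app M N) (.app M' N)
  | appR (M : Lam) {N N' : Lam} : Lam.StepEta N N' → Lam.StepEta (.app M N) (.app M N')

/-- β-convertibility `=_β` on pure λ-terms. -/
def Lam.Beq : Lam → Lam → Prop := Relation.EqvGen Lam.Step

/-- βη-convertibility `=_{βη}` on pure λ-terms. -/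
def Lam.BEeq : Lam → Lam → Prop := Relation.EqvGen Lam.StepEta

/-- Δ-terms: constants `u_Δ`, variables, typed abstractions, applications,
strong pairs, projections and explicit type coercions. -/
inductive DTerm : Type
  | uc : DTerm → DTerm
  | var : ℕ → DTerm
  | lam : ℕ → Ty → DTerm → DTerm
  | app : DTerm → DTerm → DTerm
  | pair : DTerm → DTerm → DTerm
  | pr1 : DTerm → DTerm
  | pr2 : DTerm → DTerm
  | coe : DTerm → Ty → DTerm
  deriving DecidableEq

/-- The essence function, mapping Δ-terms to pure λ-terms. -/
def DTerm.essence : DTerm → Lam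
  | .uc d => d.essence
  | .var x => .var x
  | .lam x _ d => .lam x d.essence
  | .app d1 d2 => .app d1.essence d2.essence
  | .pair d1 _ => d1.essence
  | .pr1 d => d.essence
  | .pr2 d => d.essence
  | .coe d _ => d.essence

/-- Substitution on Δ-terms. -/
def DTerm.subst : DTerm → ℕ → DTerm → DTerm
  | .uc d, x, N => .uc (d.subst x N)
  | .var y, x, N => if y = x then N else .var y
  | .lam y σ d, x, N => if y = x then .lam y σ d else .lam y σ (d.subst x N)
  | .app d1 d2, x, N => .app (d1.subst x N) (d2.subst x N)
  | .pair d1 d2, x, N => .pair (d1.subst x N) (d2.subst x N)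
  | .pr1 d, x, N => .pr1 (d.subst x N)
  | .pr2 d, x, N => .pr2 (d.subst x N)
  | .coe d σ, x, N => .coe (d.subst x N) σ

/-- Free variables of a Δ-term. -/
def DTerm.fv : DTerm → Set ℕ
  | .uc d => d.fv
  | .var y => {y}
  | .lam y _ d => d.fv \ {y}
  | .app d1 d2 => d1.fv ∪ d2.fv
  | .pair d1 d2 => d1.fv ∪ d2.fv
  | .pr1 d => d.fv
  | .pr2 d => d.fv
  | .coe d _ => d.fv

/-- One-step βprᵢ-reduction: contextual closure of (β) and (prᵢ),
not reducing inside the index of a constant `u_Δ`. -/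
inductive DTerm.Step : DTerm → DTerm → Prop
  | beta (x : ℕ) (σ : Ty) (d1 d2 : DTerm) :
      DTerm.Step (.app (.lam x σ d1) d2) (d1.subst x d2)
  | proj1 (d1 d2 : DTerm) : DTerm.Step (.pr1 (.pair d1 d2)) d1
  | proj2 (d1 d2 : DTerm) : DTerm.Step (.pr2 (.pair d1 d2)) d2
  | lamC (x : ℕ) (σ : Ty) {d d' : DTerm} :
      DTerm.Step d d' → DTerm.Step (.lam x σ d) (.lam x σ d')
  | appL {d1 d1' : DTerm} (d2 : DTerm) :
      DTerm.Step d1 d1' → DTerm.Step (.app d1 d2) (.app d1' d2)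
  | appR (d1 : DTerm) {d2 d2' : DTerm} :
      DTerm.Step d2 d2' → DTerm.Step (.app d1 d2) (.app d1 d2')
  | pairL {d1 d1' : DTerm} (d2 : DTerm) :
      DTerm.Step d1 d1' → DTerm.Step (.pair d1 d2) (.pair d1' d2)
  | pairR (d1 : DTerm) {d2 d2' : DTerm} :
      DTerm.Step d2 d2' → DTerm.Step (.pair d1 d2) (.pair d1 d2')
  | pr1C {d d' : DTerm} : DTerm.Step d d' → DTerm.Step (.pr1 d) (.pr1 d')
  | pr2C {d d' : DTerm} : DTerm.Step d d' → DTerm.Step (.pr2 d) (.pr2 d')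
  | coeC (σ : Ty) {d d' : DTerm} : DTerm.Step d d' → DTerm.Step (.coe d σ) (.coe d' σ)

/-- Multistep βprᵢ-reduction. -/
def DTerm.MStep : DTerm → DTerm → Prop := Relation.ReflTransGen DTerm.Step

/-- Parallel reduction `⟹` on Δ-terms. -/
inductive DTerm.Par : DTerm → DTerm → Prop
  | var (x : ℕ) : DTerm.Par (.var x) (.var x)
  | uc (d : DTerm) : DTerm.Par (.uc d) (.uc d)
  | coe (σ : Ty) {d d' : DTerm} : DTerm.Par d d' → DTerm.Par (.coe d σ) (.coe d' σ)
  | app {d1 d1' d2 d2' : DTerm} :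
      DTerm.Par d1 d1' → DTerm.Par d2 d2' → DTerm.Par (.app d1 d2) (.app d1' d2')
  | lam (x : ℕ) (σ : Ty) {d d' : DTerm} :
      DTerm.Par d d' → DTerm.Par (.lam x σ d) (.lam x σ d')
  | beta (x : ℕ) (σ : Ty) {d1 d1' d2 d2' : DTerm} :
      DTerm.Par d1 d1' → DTerm.Par d2 d2' →
      DTerm.Par (.app (.lam x σ d1) d2) (d1'.subst x d2')
  | pair {d1 d1' d2 d2' : DTerm} :
      DTerm.Par d1 d1' → DTerm.Par d2 d2' → DTerm.Par (.pair d1 d2) (.pair d1' d2')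
  | pr1 {d d' : DTerm} : DTerm.Par d d' → DTerm.Par (.pr1 d) (.pr1 d')
  | pr2 {d d' : DTerm} : DTerm.Par d d' → DTerm.Par (.pr2 d) (.pr2 d')
  | proj1 {d1 d1' : DTerm} (d2 : DTerm) :
      DTerm.Par d1 d1' → DTerm.Par (.pr1 (.pair d1 d2)) d1'
  | proj2 (d1 : DTerm) {d2 d2' : DTerm} :
      DTerm.Par d2 d2' → DTerm.Par (.pr2 (.pair d1 d2)) d2'

/-- The complete development `Δ*`: simultaneous contraction of all βprᵢ-redexes. -/
def DTerm.cdev : DTerm → DTerm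
  | .uc d => .uc d
  | .var x => .var x
  | .coe d σ => .coe d.cdev σ
  | .pair d1 d2 => .pair d1.cdev d2.cdev
  | .lam x σ d => .lam x σ d.cdev
  | .app (.lam x _ d1) d2 => d1.cdev.subst x d2.cdev
  | .app d1 d2 => .app d1.cdev d2.cdev
  | .pr1 (.pair d1 _) => d1.cdev
  | .pr1 d => .pr1 d.cdev
  | .pr2 (.pair _ d2) => d2.cdev
  | .pr2 d => .pr2 d.cdev

/-- Synchronous one-step reduction `→∥`: like `→`, except that both components
of a strong pair are reduced simultaneously with syntactically equal essences. -/
inductive DTerm.SStep : DTerm → DTerm → Prop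
  | beta (x : ℕ) (σ : Ty) (d1 d2 : DTerm) :
      DTerm.SStep (.app (.lam x σ d1) d2) (d1.subst x d2)
  | proj1 (d1 d2 : DTerm) : DTerm.SStep (.pr1 (.pair d1 d2)) d1
  | proj2 (d1 d2 : DTerm) : DTerm.SStep (.pr2 (.pair d1 d2)) d2
  | lamC (x : ℕ) (σ : Ty) {d d' : DTerm} :
      DTerm.SStep d d' → DTerm.SStep (.lam x σ d) (.lam x σ d')
  | appL {d1 d1' : DTerm} (d2 : DTerm) :
      DTerm.SStep d1 d1' → DTerm.SStep (.app d1 d2) (.app d1' d2)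
  | appR (d1 : DTerm) {d2 d2' : DTerm} :
      DTerm.SStep d2 d2' → DTerm.SStep (.app d1 d2) (.app d1 d2')
  | pairC {d1 d1' d2 d2' : DTerm} :
      DTerm.SStep d1 d1' → DTerm.SStep d2 d2' →
      d1'.essence = d2'.essence →
      DTerm.SStep (.pair d1 d2) (.pair d1' d2')
  | pr1C {d d' : DTerm} : DTerm.SStep d d' → DTerm.SStep (.pr1 d) (.pr1 d')
  | pr2C {d d' : DTerm} : DTerm.SStep d d' → DTerm.SStep (.pr2 d) (.pr2 d')
  | coeC (σ : Ty) {d d' : DTerm} : DTerm.SStep d d' → DTerm.SStep (.coe d σ) (.coe d' σ)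

/-- One-step η-reduction on Δ-terms (contextual closure). -/
inductive DTerm.EtaStep : DTerm → DTerm → Prop
  | eta (x : ℕ) (σ : Ty) (d : DTerm) :
      x ∉ d.fv → DTerm.EtaStep (.lam x σ (.app d (.var x))) d
  | lamC (x : ℕ) (σ : Ty) {d d' : DTerm} :
      DTerm.EtaStep d d' → DTerm.EtaStep (.lam x σ d) (.lam x σ d')
  | appL {d1 d1' : DTerm} (d2 : DTerm) :
      DTerm.EtaStep d1 d1' → DTerm.EtaStep (.app d1 d2) (.app d1' d2)
  | appR (d1 : DTerm) {d2 d2' : DTerm} :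
      DTerm.EtaStep d2 d2' → DTerm.EtaStep (.app d1 d2) (.app d1 d2')
  | pairL {d1 d1' : DTerm} (d2 : DTerm) :
      DTerm.EtaStep d1 d1' → DTerm.EtaStep (.pair d1 d2) (.pair d1' d2)
  | pairR (d1 : DTerm) {d2 d2' : DTerm} :
      DTerm.EtaStep d2 d2' → DTerm.EtaStep (.pair d1 d2) (.pair d1 d2')
  | pr1C {d d' : DTerm} : DTerm.EtaStep d d' → DTerm.EtaStep (.pr1 d) (.pr1 d')
  | pr2C {d d' : DTerm} : DTerm.EtaStep d d' → DTerm.EtaStep (.pr2 d) (.pr2 d')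
  | coeC (σ : Ty) {d d' : DTerm} : DTerm.EtaStep d d' → DTerm.EtaStep (.coe d σ) (.coe d' σ)

/-- Typing contexts: partial maps from variables to types. -/
def Ctx : Type := ℕ → Option Ty

/-- Context update `B, x:σ`. -/
def Ctx.update (B : Ctx) (x : ℕ) (σ : Ty) : Ctx :=
  fun y => if y = x then some σ else B y

/-- Context inclusion `B ⊆ B'`. -/
def Ctx.Sub (B B' : Ctx) : Prop := ∀ x σ, B x = some σ → B' x = some σ

/-- The generic intersection typed system `Δ^T_R` for the Δ-calculus,
parametrized by whether ω is among the atoms (`oA`), a type theory `le` and an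
equivalence relation `R` on pure λ-terms. -/
inductive Typing (oA : Prop) (le : Ty → Ty → Prop) (R : Lam → Lam → Prop) :
    Ctx → DTerm → Ty → Prop
  | top {B : Ctx} {d : DTerm} : oA → Typing oA le R B (.uc d) .omega
  | ax {B : Ctx} {x : ℕ} {σ : Ty} : B x = some σ → Typing oA le R B (.var x) σ
  | arrI {B : Ctx} {x : ℕ} {σ τ : Ty} {d : DTerm} :
      Typing oA le R (Ctx.update B x σ) d τ → Typing oA le R B (.lam x σ d) (.arr σ τ)
  | arrE {B : Ctx} {σ τ : Ty} {d1 d2 : DTerm} :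
      Typing oA le R B d1 (.arr σ τ) → Typing oA le R B d2 σ →
      Typing oA le R B (.app d1 d2) τ
  | interI {B : Ctx} {σ τ : Ty} {d1 d2 : DTerm} :
      Typing oA le R B d1 σ → Typing oA le R B d2 τ →
      R d1.essence d2.essence →
      Typing oA le R B (.pair d1 d2) (.inter σ τ)
  | interE1 {B : Ctx} {σ τ : Ty} {d : DTerm} :
      Typing oA le R B d (.inter σ τ) → Typing oA le R B (.pr1 d) σ
  | interE2 {B : Ctx} {σ τ : Ty} {d : DTerm} :
      Typing oA le R B d (.inter σ τ) → Typing oA le R B (.pr2 d) τ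
  | sub {B : Ctx} {σ τ : Ty} {d : DTerm} :
      Typing oA le R B d σ → le σ τ → Typing oA le R B (.coe d τ) τ

/-- The intersection type assignment system `λ^T_∩` for pure λ-terms. -/
inductive Assign (oA : Prop) (le : Ty → Ty → Prop) : Ctx → Lam → Ty → Prop
  | top {B : Ctx} {M : Lam} : oA → Assign oA le B M .omega
  | ax {B : Ctx} {x : ℕ} {σ : Ty} : B x = some σ → Assign oA le B (.var x) σ
  | arrI {B : Ctx} {x : ℕ} {σ τ : Ty} {M : Lam} :
      Assign oA le (Ctx.update B x σ) M τ → Assign oA le B (.lam x M) (.arr σ τ)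
  | arrE {B : Ctx} {σ τ : Ty} {M N : Lam} :
      Assign oA le B M (.arr σ τ) → Assign oA le B N σ → Assign oA le B (.app M N) τ
  | interI {B : Ctx} {σ τ : Ty} {M : Lam} :
      Assign oA le B M σ → Assign oA le B M τ → Assign oA le B M (.inter σ τ)
  | interE1 {B : Ctx} {σ τ : Ty} {M : Lam} :
      Assign oA le B M (.inter σ τ) → Assign oA le B M σ
  | interE2 {B : Ctx} {σ τ : Ty} {M : Lam} :
      Assign oA le B M (.inter σ τ) → Assign oA le B M τ
  | sub {B : Ctx} {σ τ : Ty} {M : Lam} :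
      Assign oA le B M σ → le σ τ → Assign oA le B M τ

/-- The Coppo-Dezani-Sallé type theory: minimal theory plus `σ ≤ ω`. -/
inductive LeCDS : Ty → Ty → Prop
  | refl (σ : Ty) : LeCDS σ σ
  | incl1 (σ τ : Ty) : LeCDS (.inter σ τ) σ
  | incl2 (σ τ : Ty) : LeCDS (.inter σ τ) τ
  | glb {ρ σ τ : Ty} : LeCDS ρ σ → LeCDS ρ τ → LeCDS ρ (.inter σ τ)
  | trans {σ τ ρ : Ty} : LeCDS σ τ → LeCDS τ ρ → LeCDS σ ρ
  | omega_top (σ : Ty) : LeCDS σ .omega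

/-- The Barendregt-Coppo-Dezani type theory. -/
inductive LeBCD : Ty → Ty → Prop
  | refl (σ : Ty) : LeBCD σ σ
  | incl1 (σ τ : Ty) : LeBCD (.inter σ τ) σ
  | incl2 (σ τ : Ty) : LeBCD (.inter σ τ) τ
  | glb {ρ σ τ : Ty} : LeBCD ρ σ → LeBCD ρ τ → LeBCD ρ (.inter σ τ)
  | trans {σ τ ρ : Ty} : LeBCD σ τ → LeBCD τ ρ → LeBCD σ ρ
  | omega_top (σ : Ty) : LeBCD σ .omega
  | omega_arr (σ : Ty) : LeBCD .omega (.arr σ .omega)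
  | arr_inter (σ τ ρ : Ty) : LeBCD (.inter (.arr σ τ) (.arr σ ρ)) (.arr σ (.inter τ ρ))
  | arr {σ1 σ2 τ1 τ2 : Ty} :
      LeBCD σ2 σ1 → LeBCD τ1 τ2 → LeBCD (.arr σ1 τ1) (.arr σ2 τ2)

/-- Simple types with pairs: one atom `∘`, arrows and products. -/
inductive STy : Type
  | base : STy
  | arr : STy → STy → STy
  | prod : STy → STy → STy
  deriving DecidableEq

/-- Terms of the simply typed λ-calculus with pairs, a constant `u_∘` and
constants `c_σ` for every simple type `σ`. -/
inductive STerm : Type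
  | var : ℕ → STerm
  | uc : STerm
  | cst : STy → STerm
  | lam : ℕ → STy → STerm → STerm
  | app : STerm → STerm → STerm
  | pair : STerm → STerm → STerm
  | pr1 : STerm → STerm
  | pr2 : STerm → STerm
  deriving DecidableEq

def STerm.subst : STerm → ℕ → STerm → STerm
  | .var y, x, N => if y = x then N else .var y
  | .uc, _, _ => .uc
  | .cst σ, _, _ => .cst σ
  | .lam y σ m, x, N => if y = x then .lam y σ m else .lam y σ (m.subst x N)
  | .app m1 m2, x, N => .app (m1.subst x N) (m2.subst x N)
  | .pair m1 m2, x, N => .pair (m1.subst x N) (m2.subst x N)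
  | .pr1 m, x, N => .pr1 (m.subst x N)
  | .pr2 m, x, N => .pr2 (m.subst x N)

/-- One-step reduction (β and projections) in the target calculus. -/
inductive STerm.Step : STerm → STerm → Prop
  | beta (x : ℕ) (σ : STy) (m1 m2 : STerm) :
      STerm.Step (.app (.lam x σ m1) m2) (m1.subst x m2)
  | proj1 (m1 m2 : STerm) : STerm.Step (.pr1 (.pair m1 m2)) m1
  | proj2 (m1 m2 : STerm) : STerm.Step (.pr2 (.pair m1 m2)) m2
  | lamC (x : ℕ) (σ : STy) {m m' : STerm} :
      STerm.Step m m' → STerm.Step (.lam x σ m) (.lam x σ m')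
  | appL {m1 m1' : STerm} (m2 : STerm) :
      STerm.Step m1 m1' → STerm.Step (.app m1 m2) (.app m1' m2)
  | appR (m1 : STerm) {m2 m2' : STerm} :
      STerm.Step m2 m2' → STerm.Step (.app m1 m2) (.app m1 m2')
  | pairL {m1 m1' : STerm} (m2 : STerm) :
      STerm.Step m1 m1' → STerm.Step (.pair m1 m2) (.pair m1' m2)
  | pairR (m1 : STerm) {m2 m2' : STerm} :
      STerm.Step m2 m2' → STerm.Step (.pair m1 m2) (.pair m1 m2')
  | pr1C {m m' : STerm} : STerm.Step m m' → STerm.Step (.pr1 m) (.pr1 m')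
  | pr2C {m m' : STerm} : STerm.Step m m' → STerm.Step (.pr2 m) (.pr2 m')

def SCtx : Type := ℕ → Option STy

def SCtx.update (Γ : SCtx) (x : ℕ) (σ : STy) : SCtx :=
  fun y => if y = x then some σ else Γ y

/-- Typing in the simply typed λ-calculus with pairs. -/
inductive STyping : SCtx → STerm → STy → Prop
  | var {Γ : SCtx} {x : ℕ} {σ : STy} : Γ x = some σ → STyping Γ (.var x) σ
  | uc {Γ : SCtx} : STyping Γ .uc .base
  | cst {Γ : SCtx} (σ : STy) : STyping Γ (.cst σ) σ
  | lam {Γ : SCtx} {x : ℕ} {σ τ : STy} {m : STerm} :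
      STyping (SCtx.update Γ x σ) m τ → STyping Γ (.lam x σ m) (.arr σ τ)
  | app {Γ : SCtx} {σ τ : STy} {m1 m2 : STerm} :
      STyping Γ m1 (.arr σ τ) → STyping Γ m2 σ → STyping Γ (.app m1 m2) τ
  | pair {Γ : SCtx} {σ τ : STy} {m1 m2 : STerm} :
      STyping Γ m1 σ → STyping Γ m2 τ → STyping Γ (.pair m1 m2) (.prod σ τ)
  | pr1 {Γ : SCtx} {σ τ : STy} {m : STerm} :
      STyping Γ m (.prod σ τ) → STyping Γ (.pr1 m) σ
  | pr2 {Γ : SCtx} {σ τ : STy} {m : STerm} :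
      STyping Γ m (.prod σ τ) → STyping Γ (.pr2 m) τ

/-- The forgetful map `|_|` on intersection types. -/
def mapTy : Ty → STy
  | .atom _ => .base
  | .omega => .base
  | .arr σ τ => .arr (mapTy σ) (mapTy τ)
  | .inter σ τ => .prod (mapTy σ) (mapTy τ)

/-- The forgetful map on contexts. -/
def mapCtx (B : Ctx) : SCtx := fun x => (B x).map mapTy

/-- The forgetful translation `|Δ|_B` of Δ-terms into the simply typed
λ-calculus with pairs, presented as an inductive relation (the coercion case
refers to the typing of the coerced subterm). -/
inductive Forget (oA : Prop) (le : Ty → Ty → Prop) (R : Lam → Lam → Prop) :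
    Ctx → DTerm → STerm → Prop
  | var (B : Ctx) (x : ℕ) : Forget oA le R B (.var x) (.var x)
  | uc (B : Ctx) (d : DTerm) : Forget oA le R B (.uc d) .uc
  | lam {B : Ctx} {x : ℕ} {σ : Ty} {d : DTerm} {m : STerm} :
      Forget oA le R (Ctx.update B x σ) d m →
      Forget oA le R B (.lam x σ d) (.lam x (mapTy σ) m)
  | app {B : Ctx} {d1 d2 : DTerm} {m1 m2 : STerm} :
      Forget oA le R B d1 m1 → Forget oA le R B d2 m2 →
      Forget oA le R B (.app d1 d2) (.app m1 m2)
  | pair {B : Ctx} {d1 d2 : DTerm} {m1 m2 : STerm} :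
      Forget oA le R B d1 m1 → Forget oA le R B d2 m2 →
      Forget oA le R B (.pair d1 d2) (.pair m1 m2)
  | pr1 {B : Ctx} {d : DTerm} {m : STerm} :
      Forget oA le R B d m → Forget oA le R B (.pr1 d) (.pr1 m)
  | pr2 {B : Ctx} {d : DTerm} {m : STerm} :
      Forget oA le R B d m → Forget oA le R B (.pr2 d) (.pr2 m)
  | coe {B : Ctx} {d : DTerm} {m : STerm} {σ τ : Ty} :
      Forget oA le R B d m → Typing oA le R B d σ →
      Forget oA le R B (.coe d τ) (.app (.cst (.arr (mapTy σ) (mapTy τ))) m)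

/-- The (reflexive) subterm relation on Δ-terms; the index of a constant
`u_Δ` is not a subterm. -/
inductive DTerm.IsSubterm : DTerm → DTerm → Prop
  | refl (d : DTerm) : DTerm.IsSubterm d d
  | lam {d' d : DTerm} (x : ℕ) (σ : Ty) :
      DTerm.IsSubterm d' d → DTerm.IsSubterm d' (.lam x σ d)
  | appL {d' d1 : DTerm} (d2 : DTerm) :
      DTerm.IsSubterm d' d1 → DTerm.IsSubterm d' (.app d1 d2)
  | appR (d1 : DTerm) {d' d2 : DTerm} :
      DTerm.IsSubterm d' d2 → DTerm.IsSubterm d' (.app d1 d2)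
  | pairL {d' d1 : DTerm} (d2 : DTerm) :
      DTerm.IsSubterm d' d1 → DTerm.IsSubterm d' (.pair d1 d2)
  | pairR (d1 : DTerm) {d' d2 : DTerm} :
      DTerm.IsSubterm d' d2 → DTerm.IsSubterm d' (.pair d1 d2)
  | pr1 {d' d : DTerm} : DTerm.IsSubterm d' d → DTerm.IsSubterm d' (.pr1 d)
  | pr2 {d' d : DTerm} : DTerm.IsSubterm d' d → DTerm.IsSubterm d' (.pr2 d)
  | coe {d' d : DTerm} (σ : Ty) :
      DTerm.IsSubterm d' d → DTerm.IsSubterm d' (.coe d σ)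

/-- Coercion-free Δ-terms. -/
def DTerm.CoercionFree : DTerm → Prop
  | .uc d => d.CoercionFree
  | .var _ => True
  | .lam _ _ d => d.CoercionFree
  | .app d1 d2 => d1.CoercionFree ∧ d2.CoercionFree
  | .pair d1 d2 => d1.CoercionFree ∧ d2.CoercionFree
  | .pr1 d => d.CoercionFree
  | .pr2 d => d.CoercionFree
  | .coe _ _ => False

/-- the essence function commutes with substitution. -/
theorem essence_subst (Δ₁ Δ₂ : DTerm) (x : ℕ) :
    (Δ₁.subst x Δ₂).essence = Δ₁.essence.subst x Δ₂.essence := by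
  induction Δ₁ with
  | uc d ih => simpa [DTerm.subst, DTerm.essence] using ih
  | var y => by_cases h : y = x <;> simp [DTerm.subst, DTerm.essence, Lam.subst, h]
  | lam y σ d ih => by_cases h : y = x <;> simp [DTerm.subst, DTerm.essence, Lam.subst, h, ih]
  | app d1 d2 ih1 ih2 => simp [DTerm.subst, DTerm.essence, Lam.subst, ih1, ih2]
  | pair d1 d2 ih1 ih2 => simp [DTerm.subst, DTerm.essence, ih1]
  | pr1 d ih => simpa [DTerm.subst, DTerm.essence] using ih
  | pr2 d ih => simpa [DTerm.subst, DTerm.essence] using ih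
  | coe d σ ih => simpa [DTerm.subst, DTerm.essence] using ih
end

section
/- Unicity of typing for the Δ-calculus: in any intersection typed system Δ^T_R, if B ⊢ Δ : σ and B ⊢ Δ : τ are both derivable, then σ = τ. -/
set_option autoImplicit true

/-- unicity of typing in any intersection typed system `Δ^T_R`. -/
theorem unicity_of_typing (oA : Prop) (le : Ty → Ty → Prop) (R : Lam → Lam → Prop)
    (B : Ctx) (Δ : DTerm) (σ τ : Ty)
    (h₁ : Typing oA le R B Δ σ) (h₂ : Typing oA le R B Δ τ) :
    σ = τ := by
  induction h₁ generalizing τ with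
  | top _ => cases h₂; rfl
  | ax h => cases h₂ with
    | ax h' => rw [h] at h'; exact Option.some.inj h'
  | arrI _ ih => cases h₂ with
    | arrI h' => rw [ih _ h']
  | arrE _ _ ih1 _ => cases h₂ with
    | arrE h1' h2' => exact (Ty.arr.injEq _ _ _ _).mp (ih1 _ h1') |>.2
  | interI _ _ _ ih1 ih2 => cases h₂ with
    | interI h1' h2' _ => rw [ih1 _ h1', ih2 _ h2']
  | interE1 _ ih => cases h₂ with
    | interE1 h' => exact (Ty.inter.injEq _ _ _ _).mp (ih _ h') |>.1
  | interE2 _ ih => cases h₂ with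
    | interE2 h' => exact (Ty.inter.injEq _ _ _ _).mp (ih _ h') |>.2
  | sub _ _ _ => cases h₂ with
    | sub _ _ => rfl
end

section
/- Essence reduction lemma: for R ∈ {=_β, =_{βη}}, if B ⊢ Δ₁ : σ is derivable in Δ^T_R and Δ₁ → Δ₂ by one βprᵢ-reduction step, then essence(Δ₁) R essence(Δ₂). In particular, if B ⊢ Δ₁ : σ is derivable in Δ^T_≡ and Δ₁ → Δ₂, then essence(Δ₁) =_β essence(Δ₂). -/
set_option autoImplicit true

lemma essence_subst_s10 (d : DTerm) (x : ℕ) (N : DTerm) :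
    (d.subst x N).essence = d.essence.subst x N.essence := by
  induction d with
  | uc d ih => simpa [DTerm.subst, DTerm.essence] using ih
  | var y =>
    simp only [DTerm.subst, DTerm.essence]
    by_cases h : y = x <;> simp [h, DTerm.essence, Lam.subst]
  | lam y σ d ih =>
    simp only [DTerm.subst, DTerm.essence]
    by_cases h : y = x <;> simp [h, DTerm.essence, Lam.subst, ih]
  | app d1 d2 ih1 ih2 => simp [DTerm.subst, DTerm.essence, Lam.subst, ih1, ih2]
  | pair d1 d2 ih1 ih2 => simp [DTerm.subst, DTerm.essence, ih1]
  | pr1 d ih => simp [DTerm.subst, DTerm.essence, ih]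
  | pr2 d ih => simp [DTerm.subst, DTerm.essence, ih]
  | coe d σ ih => simp [DTerm.subst, DTerm.essence, ih]

lemma eqvGen_map {α : Type*} {St : α → α → Prop} {f : α → α}
    (hf : ∀ a b, St a b → St (f a) (f b)) {a b : α}
    (h : Relation.EqvGen St a b) : Relation.EqvGen St (f a) (f b) := by
  induction h with
  | rel a b h => exact Relation.EqvGen.rel _ _ (hf _ _ h)
  | refl a => exact Relation.EqvGen.refl _
  | symm a b _ ih => exact Relation.EqvGen.symm _ _ ih
  | trans a b c _ _ ih1 ih2 => exact Relation.EqvGen.trans _ _ _ ih1 ih2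

lemma eqvGen_map2 {α : Type*} {St : α → α → Prop} {f : α → α → α}
    (hfL : ∀ a b c, St a b → St (f a c) (f b c))
    (hfR : ∀ a b c, St b c → St (f a b) (f a c)) {a b c d : α}
    (h1 : Relation.EqvGen St a b) (h2 : Relation.EqvGen St c d) :
    Relation.EqvGen St (f a c) (f b d) := by
  refine Relation.EqvGen.trans _ (f b c) _ ?_ ?_
  · exact eqvGen_map (fun x y h => hfL x y c h) h1
  · exact eqvGen_map (fun x y h => hfR b x y h) h2

lemma essence_reduction_key (St : Lam → Lam → Prop)
    (hbeta : ∀ x M N, St (.app (.lam x M) N) (M.subst x N))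
    (hlam : ∀ (x : ℕ) (M M' : Lam), St M M' → St (.lam x M) (.lam x M'))
    (happL : ∀ (M M' N : Lam), St M M' → St (.app M N) (.app M' N))
    (happR : ∀ (M N N' : Lam), St N N' → St (.app M N) (.app M N'))
    (oA : Prop) (le : Ty → Ty → Prop) (R : Lam → Lam → Prop)
    (hR : ∀ a b, R a b → Relation.EqvGen St a b)
    {Δ₁ Δ₂ : DTerm} (hs : DTerm.Step Δ₁ Δ₂) :
    ∀ (B : Ctx) (σ : Ty), Typing oA le R B Δ₁ σ →
      Relation.EqvGen St Δ₁.essence Δ₂.essence := by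
  induction hs with
  | beta x σ d1 d2 =>
    intro B τ ht
    rw [essence_subst_s10]
    exact Relation.EqvGen.rel _ _ (hbeta x d1.essence d2.essence)
  | proj1 d1 d2 => intro B τ ht; exact Relation.EqvGen.refl _
  | proj2 d1 d2 =>
    intro B τ ht
    cases ht with
    | interE2 hp =>
      cases hp with
      | interI h1 h2 hr => exact hR _ _ hr
  | lamC x σ hs ih =>
    intro B τ ht
    cases ht with
    | arrI h => exact eqvGen_map (fun a b => hlam x a b) (ih _ _ h)
  | appL d2 hs ih =>
    intro B τ ht
    cases ht with
    | arrE h1 h2 =>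
      exact eqvGen_map (fun a b h => happL a b d2.essence h) (ih _ _ h1)
  | appR d1 hs ih =>
    intro B τ ht
    cases ht with
    | arrE h1 h2 =>
      exact eqvGen_map (fun a b h => happR d1.essence a b h) (ih _ _ h2)
  | pairL d2 hs ih =>
    intro B τ ht
    cases ht with
    | interI h1 h2 hr => exact ih _ _ h1
  | pairR d1 hs ih => intro B τ ht; exact Relation.EqvGen.refl _
  | pr1C hs ih =>
    intro B τ ht
    cases ht with
    | interE1 h => exact ih _ _ h
  | pr2C hs ih =>
    intro B τ ht
    cases ht with
    | interE2 h => exact ih _ _ h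
  | coeC σ hs ih =>
    intro B τ ht
    cases ht with
    | sub h _ => exact ih _ _ h

/-- essence reduction: a one-step βprᵢ-reduction of a term
typable in `Δ^T_R` (for `R ∈ {=_β, =_{βη}}`) keeps the essence `R`-equal;
for `Δ^T_≡` the essences are β-convertible. -/
theorem essence_reduction :
    (∀ (oA : Prop) (le : Ty → Ty → Prop) (B : Ctx) (Δ₁ Δ₂ : DTerm) (σ : Ty),
      Typing oA le Lam.Beq B Δ₁ σ → DTerm.Step Δ₁ Δ₂ →
        Lam.Beq Δ₁.essence Δ₂.essence) ∧
    (∀ (oA : Prop) (le : Ty → Ty → Prop) (B : Ctx) (Δ₁ Δ₂ : DTerm) (σ : Ty),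
      Typing oA le Lam.BEeq B Δ₁ σ → DTerm.Step Δ₁ Δ₂ →
        Lam.BEeq Δ₁.essence Δ₂.essence) ∧
    (∀ (oA : Prop) (le : Ty → Ty → Prop) (B : Ctx) (Δ₁ Δ₂ : DTerm) (σ : Ty),
      Typing oA le (· = ·) B Δ₁ σ → DTerm.Step Δ₁ Δ₂ →
        Lam.Beq Δ₁.essence Δ₂.essence) := by
  refine ⟨?_, ?_, ?_⟩
  · intro oA le B Δ₁ Δ₂ σ ht hs
    exact essence_reduction_key Lam.Step Lam.Step.beta
      (fun x M M' => Lam.Step.lamC x) (fun M M' N => Lam.Step.appL N)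
      (fun M N N' => Lam.Step.appR M) oA le Lam.Beq (fun a b h => h) hs B σ ht
  · intro oA le B Δ₁ Δ₂ σ ht hs
    exact essence_reduction_key Lam.StepEta Lam.StepEta.beta
      (fun x M M' => Lam.StepEta.lamC x) (fun M M' N => Lam.StepEta.appL N)
      (fun M N N' => Lam.StepEta.appR M) oA le Lam.BEeq (fun a b h => h) hs B σ ht
  · intro oA le B Δ₁ Δ₂ σ ht hs
    exact essence_reduction_key Lam.Step Lam.Step.beta
      (fun x M M' => Lam.Step.lamC x) (fun M M' N => Lam.Step.appL N)
      (fun M N N' => Lam.Step.appR M) oA le (· = ·)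
      (fun a b h => h ▸ Relation.EqvGen.refl a) hs B σ ht
end

section
/- Subject reduction for η: for T ∈ {T_CDS, T_BCD}, if B ⊢ Δ₁ : σ is derivable in Δ^T_{=_{βη}} and Δ₁ →_η Δ₂, then B ⊢ Δ₂ : σ. -/
set_option autoImplicit true

/-- Free variables of the essence are free variables of the Δ-term. -/
lemma fv_essence : ∀ (d : DTerm), d.essence.fv ⊆ d.fv := by
  intro d
  induction d with
  | uc d ih => exact ih
  | var x => exact le_refl _
  | lam x σ d ih =>
    intro y hy
    simp only [DTerm.essence, Lam.fv, DTerm.fv, Set.mem_diff] at hy ⊢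
    exact ⟨ih hy.1, hy.2⟩
  | app d1 d2 ih1 ih2 =>
    intro y hy
    simp only [DTerm.essence, Lam.fv, DTerm.fv, Set.mem_union] at hy ⊢
    exact hy.imp (fun h => ih1 h) (fun h => ih2 h)
  | pair d1 d2 ih1 ih2 =>
    intro y hy
    simp only [DTerm.essence] at hy
    exact Set.mem_union_left _ (ih1 hy)
  | pr1 d ih => exact ih
  | pr2 d ih => exact ih
  | coe d σ ih => exact ih

lemma beeq_lam (x : ℕ) {M M' : Lam} (h : Lam.BEeq M M') :
    Lam.BEeq (.lam x M) (.lam x M') := by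
  induction h with
  | rel a b h => exact .rel _ _ (.lamC x h)
  | refl a => exact .refl _
  | symm a b _ ih => exact .symm _ _ ih
  | trans a b c _ _ ih1 ih2 => exact .trans _ _ _ ih1 ih2

lemma beeq_appL {M M' : Lam} (N : Lam) (h : Lam.BEeq M M') :
    Lam.BEeq (.app M N) (.app M' N) := by
  induction h with
  | rel a b h => exact .rel _ _ (.appL N h)
  | refl a => exact .refl _
  | symm a b _ ih => exact .symm _ _ ih
  | trans a b c _ _ ih1 ih2 => exact .trans _ _ _ ih1 ih2

lemma beeq_appR (M : Lam) {N N' : Lam} (h : Lam.BEeq N N') :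
    Lam.BEeq (.app M N) (.app M N') := by
  induction h with
  | rel a b h => exact .rel _ _ (.appR M h)
  | refl a => exact .refl _
  | symm a b _ ih => exact .symm _ _ ih
  | trans a b c _ _ ih1 ih2 => exact .trans _ _ _ ih1 ih2

/-- An η-step on Δ-terms yields βη-convertible essences. -/
lemma essence_eta {d d' : DTerm} (h : DTerm.EtaStep d d') :
    Lam.BEeq d.essence d'.essence := by
  induction h with
  | eta x σ d hx =>
    exact .rel _ _ (Lam.StepEta.eta x d.essence (fun hm => hx (fv_essence d hm)))
  | lamC x σ _ ih => exact beeq_lam x ih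
  | appL d2 _ ih => exact beeq_appL _ ih
  | appR d1 _ ih => exact beeq_appR _ ih
  | pairL d2 _ ih => exact ih
  | pairR d1 _ _ => exact .refl _
  | pr1C _ ih => exact ih
  | pr2C _ ih => exact ih
  | coeC σ _ ih => exact ih

/-- Typing depends only on the context's values on the free variables. -/
lemma typing_strengthen {oA : Prop} {le : Ty → Ty → Prop} {R : Lam → Lam → Prop} :
    ∀ {B : Ctx} {d : DTerm} {σ : Ty}, Typing oA le R B d σ →
      ∀ {B' : Ctx}, (∀ y ∈ d.fv, B y = B' y) → Typing oA le R B' d σ := by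
  intro B d σ h
  induction h with
  | top h => exact fun _ => .top h
  | @ax _ x σ h =>
    intro B' hf
    exact .ax (by rw [← hf x (by simp [DTerm.fv])]; exact h)
  | @arrI B x σ τ d h ih =>
    intro B' hf
    refine .arrI (ih ?_)
    intro y hy
    by_cases hyx : y = x
    · simp [Ctx.update, hyx]
    · simp only [Ctx.update, if_neg hyx]
      exact hf y (by simp [DTerm.fv, Set.mem_diff]; exact ⟨hy, hyx⟩)
  | arrE h1 h2 ih1 ih2 =>
    intro B' hf
    exact .arrE (ih1 fun y hy => hf y (Set.mem_union_left _ hy))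
      (ih2 fun y hy => hf y (Set.mem_union_right _ hy))
  | interI h1 h2 hR ih1 ih2 =>
    intro B' hf
    exact .interI (ih1 fun y hy => hf y (Set.mem_union_left _ hy))
      (ih2 fun y hy => hf y (Set.mem_union_right _ hy)) hR
  | interE1 h ih => exact fun hf => .interE1 (ih hf)
  | interE2 h ih => exact fun hf => .interE2 (ih hf)
  | sub h hle ih => exact fun hf => .sub (ih hf) hle

/-- Subject reduction for η, uniformly in the type theory. -/
lemma sr_eta {oA : Prop} {le : Ty → Ty → Prop} :
    ∀ {B : Ctx} {d1 : DTerm} {σ : Ty}, Typing oA le Lam.BEeq B d1 σ →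
      ∀ {d2 : DTerm}, DTerm.EtaStep d1 d2 → Typing oA le Lam.BEeq B d2 σ := by
  intro B d1 σ h
  induction h with
  | top h => intro d2 hs; cases hs
  | ax h => intro d2 hs; cases hs
  | @arrI B x σ τ d h ih =>
    intro d2 hs
    cases hs with
    | lamC _ _ hst => exact .arrI (ih hst)
    | eta _ _ d0 hx =>
      cases h with
      | @arrE _ σ' _ _ _ h1 h2 =>
        cases h2 with
        | ax hx2 =>
          rw [show Ctx.update B x σ x = some σ from if_pos rfl] at hx2
          cases hx2
          refine typing_strengthen h1 ?_
          intro y hy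
          have hyx : y ≠ x := fun he => hx (he ▸ hy)
          simp [Ctx.update, if_neg hyx]
  | arrE h1 h2 ih1 ih2 =>
    intro d2 hs
    cases hs with
    | appL _ hst => exact .arrE (ih1 hst) h2
    | appR _ hst => exact .arrE h1 (ih2 hst)
  | interI h1 h2 hR ih1 ih2 =>
    intro d2 hs
    cases hs with
    | pairL _ hst =>
      exact .interI (ih1 hst) h2 (.trans _ _ _ (.symm _ _ (essence_eta hst)) hR)
    | pairR _ hst =>
      exact .interI h1 (ih2 hst) (.trans _ _ _ hR (essence_eta hst))
  | interE1 h ih =>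
    intro d2 hs
    cases hs with
    | pr1C hst => exact .interE1 (ih hst)
  | interE2 h ih =>
    intro d2 hs
    cases hs with
    | pr2C hst => exact .interE2 (ih hst)
  | sub h hle ih =>
    intro d2 hs
    cases hs with
    | coeC _ hst => exact .sub (ih hst) hle

/-- subject reduction for η in `Δ^T_{=_{βη}}` for
`T ∈ {T_CDS, T_BCD}`. -/
theorem subject_reduction_eta :
    (∀ (B : Ctx) (Δ₁ Δ₂ : DTerm) (σ : Ty),
      Typing True LeCDS Lam.BEeq B Δ₁ σ → DTerm.EtaStep Δ₁ Δ₂ →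
        Typing True LeCDS Lam.BEeq B Δ₂ σ) ∧
    (∀ (B : Ctx) (Δ₁ Δ₂ : DTerm) (σ : Ty),
      Typing True LeBCD Lam.BEeq B Δ₁ σ → DTerm.EtaStep Δ₁ Δ₂ →
        Typing True LeBCD Lam.BEeq B Δ₂ σ) := by
  exact ⟨fun B d1 d2 σ h hs => sr_eta h hs, fun B d1 d2 σ h hs => sr_eta h hs⟩
end

section
/- The forgetful translation into simply typed λ-calculus with pairs preserves typing: if B ⊢ Δ : σ in Δ^T_R, then |B| ⊢× |Δ|_B : |σ| in the simply typed λ-calculus with pairs (with a single atomic type ∘, a constant u_∘ : ∘, and constants c_σ : σ for every simple type σ). -/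
set_option autoImplicit true

lemma mapCtx_update (B : Ctx) (x : ℕ) (σ : Ty) :
    mapCtx (Ctx.update B x σ) = SCtx.update (mapCtx B) x (mapTy σ) := by
  funext y
  simp [mapCtx, Ctx.update, SCtx.update]
  split <;> rfl

/-- the forgetful translation preserves typing: a term typable in
`Δ^T_R` translates to a term of the simply typed λ-calculus with pairs typable
with the translated type in the translated context. -/
theorem forget_preserves_typing (oA : Prop) (le : Ty → Ty → Prop)
    (R : Lam → Lam → Prop) (B : Ctx) (Δ : DTerm) (σ : Ty)
    (h : Typing oA le R B Δ σ) :
    ∃ m : STerm, Forget oA le R B Δ m ∧ STyping (mapCtx B) m (mapTy σ) := by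
  induction h with
  | top h => exact ⟨.uc, .uc _ _, .uc⟩
  | ax hx =>
      exact ⟨_, .var _ _, .var (by simp [mapCtx, hx])⟩
  | arrI h ih =>
      obtain ⟨m, hf, ht⟩ := ih
      exact ⟨_, .lam hf, .lam (by rwa [mapCtx_update] at ht)⟩
  | arrE h1 h2 ih1 ih2 =>
      obtain ⟨m1, hf1, ht1⟩ := ih1
      obtain ⟨m2, hf2, ht2⟩ := ih2
      exact ⟨_, .app hf1 hf2, .app ht1 ht2⟩
  | interI h1 h2 hR ih1 ih2 =>
      obtain ⟨m1, hf1, ht1⟩ := ih1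
      obtain ⟨m2, hf2, ht2⟩ := ih2
      exact ⟨_, .pair hf1 hf2, .pair ht1 ht2⟩
  | interE1 h ih =>
      obtain ⟨m, hf, ht⟩ := ih
      exact ⟨_, .pr1 hf, .pr1 ht⟩
  | interE2 h ih =>
      obtain ⟨m, hf, ht⟩ := ih
      exact ⟨_, .pr2 hf, .pr2 ht⟩
  | sub h hle ih =>
      obtain ⟨m, hf, ht⟩ := ih
      exact ⟨_, .coe hf h, .app (.cst _) ht⟩
end

section
/- Soundness of Δ^T_≡ with respect to the intersection type assignment system: if B ⊢ Δ : σ is derivable in the typed system Δ^T_≡, then B ⊢ essence(Δ) : σ is derivable in the intersection type assignment system λ^T_∩. -/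
set_option autoImplicit true

/-- soundness of `Δ^T_≡` with respect to the intersection type
assignment system `λ^T_∩`. -/
theorem soundness (oA : Prop) (le : Ty → Ty → Prop)
    (B : Ctx) (Δ : DTerm) (σ : Ty)
    (h : Typing oA le (· = ·) B Δ σ) :
    Assign oA le B Δ.essence σ := by
  induction h with
  | top h => exact Assign.top h
  | ax h => exact Assign.ax h
  | arrI _ ih => exact Assign.arrI ih
  | arrE _ _ ih1 ih2 => exact Assign.arrE ih1 ih2
  | interI _ _ hR ih1 ih2 =>
      exact Assign.interI ih1 (by simpa [DTerm.essence, ← hR] using ih2)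
  | interE1 _ ih => exact Assign.interE1 ih
  | interE2 _ ih => exact Assign.interE2 ih
  | sub _ hle ih => exact Assign.sub ih hle
end

section
/- Completeness of Δ^T_R with respect to type assignment: if B ⊢ M : σ is derivable in the intersection type assignment system λ^T_∩ for a pure λ-term M, then there exists a Δ-term Δ with essence(Δ) ≡ M and B ⊢ Δ : σ derivable in the typed system Δ^T_R. -/
set_option autoImplicit true

/-- Embedding of pure λ-terms into Δ-terms (annotating every binder with ω). -/
def DTerm.ofLam : Lam → DTerm
  | .var x => .var x
  | .lam x M => .lam x .omega (DTerm.ofLam M)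
  | .app M N => .app (DTerm.ofLam M) (DTerm.ofLam N)

lemma DTerm.essence_ofLam (M : Lam) : (DTerm.ofLam M).essence = M := by
  induction M <;> simp [DTerm.ofLam, DTerm.essence, *]

/-- completeness of `Δ^T_R` with respect to the type assignment
system `λ^T_∩` (`R` reflexive). -/
theorem completeness (oA : Prop) (le : Ty → Ty → Prop) (R : Lam → Lam → Prop)
    (hR : ∀ M : Lam, R M M)
    (B : Ctx) (M : Lam) (σ : Ty)
    (h : Assign oA le B M σ) :
    ∃ Δ : DTerm, Δ.essence = M ∧ Typing oA le R B Δ σ := by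
  induction h with
  | top h => exact ⟨.uc (DTerm.ofLam _), DTerm.essence_ofLam _, Typing.top h⟩
  | ax h => exact ⟨.var _, rfl, Typing.ax h⟩
  | arrI _ ih =>
      obtain ⟨Δ, he, ht⟩ := ih
      exact ⟨.lam _ _ Δ, by simp [DTerm.essence, he], Typing.arrI ht⟩
  | arrE _ _ ih1 ih2 =>
      obtain ⟨Δ1, he1, ht1⟩ := ih1
      obtain ⟨Δ2, he2, ht2⟩ := ih2
      exact ⟨.app Δ1 Δ2, by simp [DTerm.essence, he1, he2], Typing.arrE ht1 ht2⟩
  | interI _ _ ih1 ih2 =>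
      obtain ⟨Δ1, he1, ht1⟩ := ih1
      obtain ⟨Δ2, he2, ht2⟩ := ih2
      exact ⟨.pair Δ1 Δ2, he1, Typing.interI ht1 ht2 (by rw [he1, he2]; exact hR _)⟩
  | interE1 _ ih =>
      obtain ⟨Δ, he, ht⟩ := ih
      exact ⟨.pr1 Δ, he, Typing.interE1 ht⟩
  | interE2 _ ih =>
      obtain ⟨Δ, he, ht⟩ := ih
      exact ⟨.pr2 Δ, he, Typing.interE2 ht⟩
  | sub _ hle ih =>
      obtain ⟨Δ, he, ht⟩ := ih
      exact ⟨.coe Δ _, he, Typing.sub ht hle⟩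
end
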